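/- arXiv:2304.14058 — 7 statements merged into one kernel-verified Lean document; each statement's English description precedes it below -/
import Mathlib

section
/- Let n, t, k be positive integers with t ≥ k+2 and n ≥ k+2, and let S ⊆ {1,…,n} ∖ {1,…,k+2}. Let x_1,…,x_t ∈ {0,1}^n be assignments with labels a_1,…,a_t ∈ {0,1}. Assume: (i) for each i ∈ {1,…,k+2} we have a_i = 1, the assignment x_i sets variable i to true and sets every variable in ({1,…,n} ∖ S) ∖ {i} to false; (ii) the assignments x_1,…,x_{k+2} all agree on the variables in S; and (iii) no assignment among x_2,…,x_t sets variable 1 to true. If there exists a k-term DNF formula agreeing with the labelled samples (x_i,a_i) for i = 2,…,t, then there exists a k-term DNF formula agreeing with the labelled samples (x_i,a_i) for i = 1,…,t. -/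
/-- An assignment `x : Fin n → Bool` satisfies a term (conjunction of literals,
represented as a finite set of pairs (variable, polarity)) iff every literal is true. -/
def SatTerm {n : ℕ} (T : Finset (Fin n × Bool)) (x : Fin n → Bool) : Prop :=
  ∀ l ∈ T, x l.1 = l.2

/-- An assignment satisfies a DNF formula (a list of terms) iff it satisfies some term. -/
def SatDNF {n : ℕ} (φ : List (Finset (Fin n × Bool))) (x : Fin n → Bool) : Prop :=
  ∃ T ∈ φ, SatTerm T x

/-- Variables and samples are 0-indexed: variable `i` (1-based) is `⟨i-1⟩ : Fin n`,
sample `x_i` (1-based) is `x ⟨i-1⟩`. -/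
theorem stmt_0 (n t k : ℕ) (hk : 1 ≤ k) (ht : k + 2 ≤ t) (hn : k + 2 ≤ n)
    (S : Finset (Fin n)) (hS : ∀ v ∈ S, k + 2 ≤ (v : ℕ))
    (x : Fin t → Fin n → Bool) (a : Fin t → Bool)
    (h1 : ∀ i : Fin t, ∀ hi : (i : ℕ) < k + 2,
      a i = true ∧ x i ⟨(i : ℕ), by omega⟩ = true ∧
      ∀ v : Fin n, v ∉ S → (v : ℕ) ≠ (i : ℕ) → x i v = false)
    (h2 : ∀ i j : Fin t, (i : ℕ) < k + 2 → (j : ℕ) < k + 2 → ∀ v ∈ S, x i v = x j v)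
    (h3 : ∀ i : Fin t, i ≠ ⟨0, by omega⟩ → x i ⟨0, by omega⟩ = false)
    (h4 : ∃ φ : List (Finset (Fin n × Bool)), φ.length ≤ k ∧
      ∀ i : Fin t, i ≠ ⟨0, by omega⟩ → (SatDNF φ (x i) ↔ a i = true)) :
    ∃ ψ : List (Finset (Fin n × Bool)), ψ.length ≤ k ∧
      ∀ i : Fin t, SatDNF ψ (x i) ↔ a i = true := by
  classical
  obtain ⟨φ, hφlen, hφ⟩ := h4
  -- the special literal (variable 0, polarity false)
  have h0n : 0 < n := by omega
  set l0 : Fin n × Bool := (⟨0, h0n⟩, false) with hl0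
  -- each sample with 1 ≤ m < k+2 satisfies some term of φ
  have key : ∀ m : Fin t, ∃ T, 1 ≤ (m : ℕ) → (m : ℕ) < k + 2 →
      T ∈ φ ∧ SatTerm T (x m) := by
    intro m
    by_cases hm : 1 ≤ (m : ℕ) ∧ (m : ℕ) < k + 2
    · have hne : m ≠ ⟨0, by omega⟩ := by
        intro h; rw [h] at hm; simp at hm
      have ha : a m = true := (h1 m hm.2).1
      obtain ⟨T, hT1, hT2⟩ := (hφ m hne).mpr ha
      exact ⟨T, fun _ _ => ⟨hT1, hT2⟩⟩
    · exact ⟨∅, fun h1' h2' => absurd ⟨h1', h2'⟩ hm⟩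
  choose g hg using key
  -- pigeonhole: two indices share a term
  set s : Finset (Fin t) := (Finset.Ico 1 (k + 2)).attachFin
    (fun m hm => by have := Finset.mem_Ico.mp hm; omega) with hs
  have hmem : ∀ m : Fin t, m ∈ s ↔ 1 ≤ (m : ℕ) ∧ (m : ℕ) < k + 2 := by
    intro m; rw [hs, Finset.mem_attachFin, Finset.mem_Ico]
  have hmaps : ∀ m ∈ s, g m ∈ φ.toFinset := by
    intro m hm
    obtain ⟨hm1, hm2⟩ := (hmem m).mp hm
    simpa using (hg m hm1 hm2).1
  have hcard : φ.toFinset.card < s.card := by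
    have h1' : φ.toFinset.card ≤ φ.length := List.toFinset_card_le φ
    have h2' : s.card = k + 1 := by
      rw [hs, Finset.card_attachFin, Nat.card_Ico]; omega
    omega
  obtain ⟨i, hi, j, hj, hij, hgij⟩ :=
    Finset.exists_ne_map_eq_of_card_lt_of_maps_to hcard hmaps
  obtain ⟨hi1, hi2⟩ := (hmem i).mp hi
  obtain ⟨hj1, hj2⟩ := (hmem j).mp hj
  have hijn : (i : ℕ) ≠ (j : ℕ) := fun h => hij (Fin.ext h)
  obtain ⟨hTφ, hsi⟩ := hg i hi1 hi2
  have hsj : SatTerm (g i) (x j) := by rw [hgij]; exact (hg j hj1 hj2).2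
  set T := g i with hT
  -- the first sample index
  set z : Fin t := ⟨0, by omega⟩ with hz
  have hz2 : (z : ℕ) < k + 2 := by simp [hz]
  -- x_0 satisfies T.erase l0
  have hx0 : SatTerm (T.erase l0) (x z) := by
    intro l hl
    have hlT : l ∈ T := Finset.mem_of_mem_erase hl
    have hlne : l ≠ l0 := Finset.ne_of_mem_erase hl
    have hbi : x i l.1 = l.2 := hsi l hlT
    have hbj : x j l.1 = l.2 := hsj l hlT
    by_cases hvS : l.1 ∈ S
    · rw [h2 z i hz2 hi2 l.1 hvS]; exact hbi
    · by_cases hv0 : (l.1 : ℕ) = 0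
      · -- then l.2 must be false, so l = l0, contradiction
        have hfi : x i l.1 = false :=
          (h1 i hi2).2.2 l.1 hvS (by omega)
        have hl2 : l.2 = false := by rw [← hbi, hfi]
        exact absurd (Prod.ext (Fin.ext hv0) hl2) hlne
      · by_cases hvi : (l.1 : ℕ) = (i : ℕ)
        · have h1i := (h1 i hi2).2.1
          have hveq : l.1 = (⟨(i : ℕ), by omega⟩ : Fin n) := Fin.ext hvi
          have hti : x i l.1 = true := by rw [hveq]; exact h1i
          have hfj : x j l.1 = false :=
            (h1 j hj2).2.2 l.1 hvS (by omega)
          rw [hti] at hbi; rw [hfj] at hbj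
          rw [← hbi] at hbj; exact absurd hbj (by simp)
        · by_cases hvj : (l.1 : ℕ) = (j : ℕ)
          · have h1j := (h1 j hj2).2.1
            have hveq : l.1 = (⟨(j : ℕ), by omega⟩ : Fin n) := Fin.ext hvj
            have htj : x j l.1 = true := by rw [hveq]; exact h1j
            have hfi : x i l.1 = false :=
              (h1 i hi2).2.2 l.1 hvS (by omega)
            rw [htj] at hbj; rw [hfi] at hbi
            rw [← hbi] at hbj; exact absurd hbj (by simp)
          · have hf0 : x z l.1 = false := by
              refine (h1 z hz2).2.2 l.1 hvS ?_
              simp [hz]; omega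
            have hfi : x i l.1 = false :=
              (h1 i hi2).2.2 l.1 hvS (by omega)
            rw [hf0, ← hbi, hfi]
  -- the new formula
  refine ⟨φ.map (fun T' => T'.erase l0), by simpa using hφlen, ?_⟩
  intro m
  by_cases hm0 : m = z
  · rw [hm0]
    have ha0 : a z = true := (h1 z hz2).1
    rw [ha0]
    simp only [iff_true]
    exact ⟨T.erase l0, List.mem_map.mpr ⟨T, hTφ, rfl⟩, hx0⟩
  · rw [← hφ m hm0]
    have hx0f : x m ⟨0, h0n⟩ = false := h3 m hm0
    constructor
    · rintro ⟨T', hT', hsat⟩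
      obtain ⟨T0, hT0, rfl⟩ := List.mem_map.mp hT'
      refine ⟨T0, hT0, fun l hl => ?_⟩
      by_cases hll : l = l0
      · subst hll; exact hx0f
      · exact hsat l (Finset.mem_erase.mpr ⟨hll, hl⟩)
    · rintro ⟨T', hT', hsat⟩
      exact ⟨T'.erase l0, List.mem_map.mpr ⟨T', hT', rfl⟩,
        fun l hl => hsat l (Finset.mem_of_mem_erase hl)⟩
end

section
/- Let k, s be positive integers, let x_1,…,x_t ∈ {0,1}^n be pairwise distinct assignments with labels a_1,…,a_t ∈ {0,1}, and let S ⊆ {1,…,n} with |S| = s be such that: (i) each assignment x_i sets at most one variable outside of S to true, and (ii) each variable outside of S is set to true by at most one of the assignments x_1,…,x_t. Then there exists a subset I ⊆ {1,…,t} with |I| ≤ 2^s·(k+2) such that there exists a k-term DNF formula agreeing with all labelled samples (x_i,a_i), i ∈ {1,…,t}, if and only if there exists a k-term DNF formula agreeing with the labelled samples (x_i,a_i), i ∈ I. -/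
namespace KTermDNF

open Finset

variable {n : ℕ} {ι : Type*}

lemma satTerm_union {T T' : Finset (Fin n × Bool)} {y : Fin n → Bool} :
    SatTerm (T ∪ T') y ↔ SatTerm T y ∧ SatTerm T' y := by
  simp only [SatTerm, mem_union, or_imp, forall_and]

lemma SatTerm.mono {T T' : Finset (Fin n × Bool)} {y : Fin n → Bool} (hT' : T' ⊆ T)
    (h : SatTerm T y) : SatTerm T' y :=
  fun l hl => h l (hT' hl)

def normalizeTerm (S : Finset (Fin n)) (B T : Finset (Fin n × Bool)) : Finset (Fin n × Bool) :=
  T.filter (fun l => l.1 ∈ S ∨ l.2 = true) ∪ B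

section normalizeTerm

variable {S : Finset (Fin n)} {B T : Finset (Fin n × Bool)}

lemma SatTerm.of_normalizeTerm {y : Fin n → Bool} (hy : ∀ v ∉ S, y v = false)
    (h : SatTerm (normalizeTerm S B T) y) : SatTerm T y := by
  intro l hl
  by_cases hl' : l.1 ∈ S ∨ l.2 = true
  · exact h l (mem_union_left _ (mem_filter.mpr ⟨hl, hl'⟩))
  · rw [not_or, Bool.not_eq_true] at hl'
    rw [hy _ hl'.1, hl'.2]

lemma SatTerm.normalizeTerm_of_mem {y : Fin n → Bool} (h : SatTerm T y) (hB : SatTerm B y) :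
    SatTerm (normalizeTerm S B T) y :=
  satTerm_union.mpr ⟨SatTerm.mono (filter_subset _ _) h, hB⟩

lemma SatTerm.normalizeTerm_of_eqOn {y y' : Fin n → Bool} (h : SatTerm T y)
    (hneg : ∀ l ∈ T, l.1 ∉ S → l.2 = false) (hS : ∀ v ∈ S, y' v = y v) (hB : SatTerm B y') :
    SatTerm (normalizeTerm S B T) y' := by
  refine satTerm_union.mpr ⟨fun l hl => ?_, hB⟩
  obtain ⟨hlT, hl⟩ := mem_filter.mp hl
  have hlS : l.1 ∈ S := by
    by_contra hlS
    simp [hlS, hneg l hlT hlS] at hl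
  rw [hS _ hlS]
  exact h l hlT

end normalizeTerm

lemma exists_satTerm_of_length_lt {φ : List (Finset (Fin n × Bool))} {y : ι → Fin n → Bool}
    {J : Finset ι} (hJ : φ.length < J.card) (h : ∀ j ∈ J, SatDNF φ (y j)) :
    ∃ T ∈ φ, ∃ j₁ ∈ J, ∃ j₂ ∈ J, j₁ ≠ j₂ ∧ SatTerm T (y j₁) ∧ SatTerm T (y j₂) := by
  classical
  choose! g hgφ hgsat using h
  obtain ⟨j₁, hj₁, j₂, hj₂, hne, heq⟩ := exists_ne_map_eq_of_card_lt_of_maps_to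
    (t := φ.toFinset) (φ.toFinset_card_le.trans_lt hJ) fun j hj => List.mem_toFinset.mpr (hgφ j hj)
  exact ⟨g j₁, hgφ j₁ hj₁, j₁, hj₁, j₂, hj₂, hne, hgsat j₁ hj₁, heq ▸ hgsat j₂ hj₂⟩

lemma exists_subset_fiberwise {β : Type*} [Fintype β] (g : ι → β) (s : Finset ι) (m : ℕ) :
    ∃ I ⊆ s, I.card ≤ Fintype.card β * m ∧
      ∀ i ∈ s, i ∉ I → ∃ J ⊆ I, J.card = m ∧ ∀ j ∈ J, g j = g i := by
  classical
  choose F hFs hFcard using fun b =>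
    exists_subset_card_eq (min_le_right m (s.filter (g · = b)).card)
  refine ⟨univ.biUnion F, biUnion_subset.mpr fun b _ => (hFs b).trans (filter_subset _ _), ?_,
    fun i hi hiI => ⟨F (g i), subset_biUnion_of_mem F (mem_univ _), ?_,
      fun j hj => (mem_filter.mp (hFs _ hj)).2⟩⟩
  · simpa using card_biUnion_le_card_mul univ F m fun b _ => (hFcard b).trans_le (min_le_left _ _)
  · rw [hFcard, min_eq_left]
    by_contra! hlt
    have hF : F (g i) = s.filter (g · = g i) :=
      eq_of_subset_of_card_le (hFs _) (by rw [hFcard, min_eq_right hlt.le])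
    exact hiI (mem_biUnion.mpr ⟨g i, mem_univ _, hF ▸ mem_filter.mpr ⟨hi, rfl⟩⟩)

lemma exists_subset_forall_exists_eq {β : Type*} [Fintype β] (g : ι → β) (s : Finset ι) :
    ∃ I ⊆ s, I.card ≤ Fintype.card β ∧ ∀ i ∈ s, ∃ j ∈ I, g j = g i := by
  obtain ⟨I, hIs, hIcard, hI⟩ := exists_subset_fiberwise g s 1
  refine ⟨I, hIs, by simpa using hIcard, fun i hi => ?_⟩
  by_cases hiI : i ∈ I
  · exact ⟨i, hiI, rfl⟩
  · obtain ⟨J, hJI, hJcard, hJ⟩ := hI i hi hiI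
    obtain ⟨j, rfl⟩ := card_eq_one.mp hJcard
    exact ⟨j, hJI (mem_singleton_self j), hJ j (mem_singleton_self j)⟩

structure IsKernel (k : ℕ) (x : ι → Fin n → Bool) (a : ι → Bool) (S : Finset (Fin n))
    (I : Finset ι) : Prop where
  exists_eq_of_vanishing : ∀ i, a i = false → (∀ v ∉ S, x i v = false) →
    ∃ j ∈ I, a j = false ∧ x j = x i
  exists_many_of_notMem : ∀ i, a i = true → i ∉ I →
    ∃ J ⊆ I, k < J.card ∧ ∀ j ∈ J, a j = true ∧ ∀ v ∈ S, x i v = x j v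

lemma exists_isKernel [Fintype ι] (k : ℕ) (x : ι → Fin n → Bool) (a : ι → Bool)
    (S : Finset (Fin n)) :
    ∃ I : Finset ι, I.card ≤ 2 ^ S.card * (k + 2) ∧ IsKernel k x a S I := by
  classical
  let pattern : ι → S → Bool := fun i v => x i v
  have hcard : Fintype.card (S → Bool) = 2 ^ S.card := by simp
  obtain ⟨Ipos, hIpos, hIpos_card, hpos⟩ :=
    exists_subset_fiberwise pattern (univ.filter (a · = true)) (k + 1)
  obtain ⟨Ineg, hIneg, hIneg_card, hneg⟩ := exists_subset_forall_exists_eq pattern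
    (univ.filter fun i => a i = false ∧ ∀ v ∉ S, x i v = false)
  refine ⟨Ipos ∪ Ineg, ?_, ⟨fun i hi hvanish => ?_, fun i hi hiI => ?_⟩⟩
  · rw [hcard] at hIpos_card hIneg_card
    calc (Ipos ∪ Ineg).card ≤ Ipos.card + Ineg.card := card_union_le _ _
      _ ≤ 2 ^ S.card * (k + 1) + 2 ^ S.card := add_le_add hIpos_card hIneg_card
      _ = 2 ^ S.card * (k + 2) := by ring
  · obtain ⟨j, hj, hji⟩ := hneg i (mem_filter.mpr ⟨mem_univ _, hi, hvanish⟩)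
    obtain ⟨hj_neg, hj_vanish⟩ := (mem_filter.mp (hIneg hj)).2
    refine ⟨j, mem_union_right _ hj, hj_neg, funext fun v => ?_⟩
    by_cases hv : v ∈ S
    · exact congrFun hji ⟨v, hv⟩
    · rw [hj_vanish v hv, hvanish v hv]
  · obtain ⟨J, hJI, hJcard, hJ⟩ := hpos i (by simp [hi]) (fun h => hiI (mem_union_left _ h))
    refine ⟨J, hJI.trans subset_union_left, by omega, fun j hj => ⟨?_, fun v hv => ?_⟩⟩
    · simpa using hIpos (hJI hj)
    · exact (congrFun (hJ j hj) ⟨v, hv⟩).symm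

section samples

variable {x : ι → Fin n → Bool} {a : ι → Bool} {S : Finset (Fin n)}

lemma neg_of_satTerm_of_ne (hcol : ∀ v ∉ S, ∀ i j, x i v = true → x j v = true → i = j)
    {T : Finset (Fin n × Bool)} {i j : ι} (hne : i ≠ j) (hi : SatTerm T (x i))
    (hj : SatTerm T (x j)) : ∀ l ∈ T, l.1 ∉ S → l.2 = false := by
  intro l hl hlS
  by_contra hpos
  rw [Bool.not_eq_false] at hpos
  exact hne (hcol l.1 hlS i j (by rw [hi l hl, hpos]) (by rw [hj l hl, hpos]))

open Classical in
noncomputable def blockingTerm (x : ι → Fin n → Bool) (a : ι → Bool) (S : Finset (Fin n)) :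
    Finset (Fin n × Bool) :=
  (univ.filter fun v => v ∉ S ∧ ∃ i, a i = false ∧ x i v = true).image fun v => (v, false)

lemma satTerm_blockingTerm (hcol : ∀ v ∉ S, ∀ i j, x i v = true → x j v = true → i = j)
    {i : ι} (hi : a i = true) : SatTerm (blockingTerm x a S) (x i) := by
  intro l hl
  simp only [blockingTerm, mem_image, mem_filter, mem_univ, true_and] at hl
  obtain ⟨v, ⟨hv, j, hj, hxj⟩, rfl⟩ := hl
  by_contra hxi
  rw [Bool.not_eq_false] at hxi
  simp [hcol v hv i j hxi hxj, hj] at hi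

lemma not_satTerm_blockingTerm {i : ι} (hi : a i = false) {v : Fin n} (hv : v ∉ S)
    (hxv : x i v = true) : ¬ SatTerm (blockingTerm x a S) (x i) := fun h => by
  simpa [hxv] using h (v, false) (by simpa [blockingTerm] using ⟨hv, i, hi, hxv⟩)

variable {k : ℕ} {B : Finset (Fin n × Bool)} {φ : List (Finset (Fin n × Bool))} {I : Finset ι}

lemma eq_true_of_satDNF_map_normalizeTerm (hφ : ∀ i ∈ I, SatDNF φ (x i) ↔ a i = true)
    (hB : ∀ i, a i = false → ∀ v ∉ S, x i v = true → ¬ SatTerm B (x i))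
    (hI : IsKernel k x a S I) {i : ι} (h : SatDNF (φ.map (normalizeTerm S B)) (x i)) :
    a i = true := by
  obtain ⟨_, hT', hsat⟩ := h
  obtain ⟨T, hT, rfl⟩ := List.mem_map.mp hT'
  by_contra hai
  rw [Bool.not_eq_true] at hai
  by_cases hvanish : ∀ v ∉ S, x i v = false
  · obtain ⟨j, hjI, hj, hji⟩ := hI.exists_eq_of_vanishing i hai hvanish
    have hφj : SatDNF φ (x j) := ⟨T, hT, hji ▸ SatTerm.of_normalizeTerm hvanish hsat⟩
    simp [(hφ j hjI).mp hφj] at hj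
  · obtain ⟨v, hv, hxv⟩ : ∃ v ∉ S, x i v = true := by simpa using hvanish
    exact hB i hai v hv hxv (satTerm_union.mp hsat).2

lemma satDNF_map_normalizeTerm (hcol : ∀ v ∉ S, ∀ i j, x i v = true → x j v = true → i = j)
    (hφ : ∀ i ∈ I, SatDNF φ (x i) ↔ a i = true) (hB : ∀ i, a i = true → SatTerm B (x i))
    (hI : IsKernel k x a S I) (hlen : φ.length ≤ k) {i : ι} (hai : a i = true) :
    SatDNF (φ.map (normalizeTerm S B)) (x i) := by
  by_cases hiI : i ∈ I
  · obtain ⟨T, hT, hsat⟩ := (hφ i hiI).mpr hai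
    exact ⟨_, List.mem_map_of_mem hT, SatTerm.normalizeTerm_of_mem hsat (hB i hai)⟩
  · obtain ⟨J, hJI, hJcard, hJ⟩ := hI.exists_many_of_notMem i hai hiI
    obtain ⟨T, hT, j₁, hj₁, j₂, hj₂, hne, h₁, h₂⟩ :=
      exists_satTerm_of_length_lt (hlen.trans_lt hJcard) fun j hj =>
        (hφ j (hJI hj)).mpr (hJ j hj).1
    exact ⟨_, List.mem_map_of_mem hT, SatTerm.normalizeTerm_of_eqOn h₁
      (neg_of_satTerm_of_ne hcol hne h₁ h₂) (hJ j₁ hj₁).2 (hB i hai)⟩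

theorem satDNF_map_normalizeTerm_blockingTerm_iff
    (hcol : ∀ v ∉ S, ∀ i j, x i v = true → x j v = true → i = j) (hI : IsKernel k x a S I)
    (hlen : φ.length ≤ k) (hφ : ∀ i ∈ I, SatDNF φ (x i) ↔ a i = true) (i : ι) :
    SatDNF (φ.map (normalizeTerm S (blockingTerm x a S))) (x i) ↔ a i = true :=
  ⟨eq_true_of_satDNF_map_normalizeTerm hφ (fun _ hj _ hv => not_satTerm_blockingTerm hj hv) hI,
    satDNF_map_normalizeTerm hcol hφ (fun _ => satTerm_blockingTerm hcol) hI hlen⟩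

end samples

end KTermDNF

theorem stmt_3_general (n t k s : ℕ)
    (x : Fin t → Fin n → Bool) (a : Fin t → Bool)
    (S : Finset (Fin n)) (hScard : S.card = s)
    (hcol : ∀ v : Fin n, v ∉ S →
      (Finset.univ.filter (fun i : Fin t => x i v = true)).card ≤ 1) :
    ∃ I : Finset (Fin t), I.card ≤ 2 ^ s * (k + 2) ∧
      ((∃ φ : List (Finset (Fin n × Bool)), φ.length ≤ k ∧
        ∀ i : Fin t, SatDNF φ (x i) ↔ a i = true) ↔
      (∃ φ : List (Finset (Fin n × Bool)), φ.length ≤ k ∧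
        ∀ i ∈ I, SatDNF φ (x i) ↔ a i = true)) := by
  have hcol' : ∀ v ∉ S, ∀ i j, x i v = true → x j v = true → i = j := fun v hv i j hi hj =>
    Finset.card_le_one.mp (hcol v hv) i (by simpa using hi) j (by simpa using hj)
  obtain ⟨I, hIcard, hI⟩ := KTermDNF.exists_isKernel k x a S
  refine ⟨I, hScard ▸ hIcard, fun ⟨φ, hlen, hφ⟩ => ⟨φ, hlen, fun i _ => hφ i⟩,
    fun ⟨φ, hlen, hφ⟩ => ⟨_, (List.length_map _).trans_le hlen,
      KTermDNF.satDNF_map_normalizeTerm_blockingTerm_iff hcol' hI hlen hφ⟩⟩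

theorem stmt_3 (n t k s : ℕ) (hk : 1 ≤ k) (hs : 1 ≤ s)
    (x : Fin t → Fin n → Bool) (a : Fin t → Bool) (hinj : Function.Injective x)
    (S : Finset (Fin n)) (hScard : S.card = s)
    (hrow : ∀ i : Fin t,
      (Finset.univ.filter (fun v : Fin n => v ∉ S ∧ x i v = true)).card ≤ 1)
    (hcol : ∀ v : Fin n, v ∉ S →
      (Finset.univ.filter (fun i : Fin t => x i v = true)).card ≤ 1) :
    ∃ I : Finset (Fin t), I.card ≤ 2 ^ s * (k + 2) ∧
      ((∃ φ : List (Finset (Fin n × Bool)), φ.length ≤ k ∧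
        ∀ i : Fin t, SatDNF φ (x i) ↔ a i = true) ↔
      (∃ φ : List (Finset (Fin n × Bool)), φ.length ≤ k ∧
        ∀ i ∈ I, SatDNF φ (x i) ↔ a i = true)) :=
  stmt_3_general n t k s x a S hScard hcol
end

section
/- Let n ≥ 1 and k ≥ 1 be integers and let F_1,…,F_m be subsets of {1,…,n}. For each i ∈ {1,…,m}, let χ_i ∈ {0,1}^n be the characteristic vector of F_i (χ_i(v)=1 iff v ∈ F_i), and let 0 denote the all-false assignment. Then the following are equivalent: (a) there exists S ⊆ {1,…,n} with |S| ≤ k and S ∩ F_i ≠ ∅ for every i ∈ {1,…,m}; (b) there exists a k-CNF formula φ over the variables {1,…,n} such that φ is satisfied by χ_i for every i ∈ {1,…,m} and φ is not satisfied by 0. -/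
/-- An assignment `x : Fin n → Bool` satisfies a clause (disjunction of literals,
represented as a finite set of pairs (variable, polarity)) iff some literal is true. -/
def SatClause {n : ℕ} (C : Finset (Fin n × Bool)) (x : Fin n → Bool) : Prop :=
  ∃ l ∈ C, x l.1 = l.2

/-- An assignment satisfies a CNF formula (a list of clauses) iff it satisfies every clause. -/
def SatCNF {n : ℕ} (φ : List (Finset (Fin n × Bool))) (x : Fin n → Bool) : Prop :=
  ∀ C ∈ φ, SatClause C x

theorem stmt_4 (n k m : ℕ) (hn : 1 ≤ n) (hk : 1 ≤ k)
    (F : Fin m → Finset (Fin n)) :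
    (∃ S : Finset (Fin n), S.card ≤ k ∧ ∀ i, (S ∩ F i).Nonempty) ↔
    (∃ φ : List (Finset (Fin n × Bool)), (∀ C ∈ φ, C.card ≤ k) ∧
      (∀ i, SatCNF φ (fun v => decide (v ∈ F i))) ∧
      ¬ SatCNF φ (fun _ => false)) := by
  constructor
  · rintro ⟨S, hcard, hhit⟩
    refine ⟨[S.image (fun v => (v, true))], ?_, ?_, ?_⟩
    · intro C hC
      simp only [List.mem_singleton] at hC
      subst hC
      exact le_trans (Finset.card_image_le) hcard
    · intro i C hC
      simp only [List.mem_singleton] at hC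
      subst hC
      obtain ⟨v, hv⟩ := hhit i
      simp only [Finset.mem_inter] at hv
      exact ⟨(v, true), Finset.mem_image_of_mem _ hv.1, by simp [hv.2]⟩
    · intro h
      obtain ⟨l, hl, hval⟩ := h _ (List.mem_singleton_self _)
      simp only [Finset.mem_image] at hl
      obtain ⟨v, _, rfl⟩ := hl
      simp at hval
  · rintro ⟨φ, hcard, hsat, hunsat⟩
    simp only [SatCNF, not_forall] at hunsat
    obtain ⟨C, hC, hCfail⟩ := hunsat
    refine ⟨C.image Prod.fst, le_trans Finset.card_image_le (hcard C hC), ?_⟩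
    intro i
    obtain ⟨l, hl, hval⟩ := hsat i C hC
    have hpos : l.2 = true := by
      by_contra h
      exact hCfail ⟨l, hl, by simp [Bool.not_eq_true] at h; simp [h]⟩
    rw [hpos] at hval
    simp only [decide_eq_true_eq] at hval
    exact ⟨l.1, Finset.mem_inter.mpr ⟨Finset.mem_image_of_mem _ hl, hval⟩⟩
end

section
/- Let n, k, m be nonnegative integers and let F_1,…,F_m be subsets of {1,…,n}, each of size at least 3. For each i ∈ {1,…,m}, let G_i be a simple graph on the vertex set {1,…,n} such that G_i contains a cycle visiting exactly the vertices of F_i, every edge of G_i lies on this cycle, and G_i has no edge with an endpoint outside F_i. Then there exists a set S ⊆ {1,…,n} with |S| ≤ k such that G_i − S is acyclic for every i ∈ {1,…,m} if and only if there exists a set H ⊆ {1,…,n} with |H| ≤ k such that H ∩ F_i ≠ ∅ for every i ∈ {1,…,m}. -/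
/-!
If `S` misses `F i`, the cycle through `F i` survives in `G i - S`. If `S` contains a vertex `x`
of `F i`, a cycle of `G i - S` would be a cycle of `G i`, hence built from edges of the cycle `c`
through `F i`. But a cycle `d` whose edges lie on a cycle `c` passes through every vertex of `c`:
at each vertex of `d` both cycles have exactly two edges, so `d` contains every `c`-edge there, and
walking along `c` never leaves `d`. So `d` would pass through `x ∈ S`.
-/

open SimpleGraph

namespace SimpleGraph.Walk

variable {V : Type*} {G : SimpleGraph V}

lemma IsCycle.not_isAcyclic_induce {s : Set V} {u : V} {c : G.Walk u u} (hc : c.IsCycle)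
    (hs : ∀ x ∈ c.support, x ∈ s) : ¬(G.induce s).IsAcyclic := fun h ↦
  h (c.induce s hs) (IsCycle.of_map (f := (Embedding.induce s).toHom) (by rwa [map_induce]))

section CycleInCycle

variable {u v : V} {c : G.Walk u u} {c' : G.Walk v v}

lemma IsCycle.mem_edges_of_edges_subset (hc : c.IsCycle) (hc' : c'.IsCycle)
    (hsub : c'.edges ⊆ c.edges) {a b : V} (ha : a ∈ c'.support) (hab : s(a, b) ∈ c.edges) :
    s(a, b) ∈ c'.edges := by
  have hnbr : c'.toSubgraph.neighborSet a ⊆ c.toSubgraph.neighborSet a := fun w hw ↦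
    adj_toSubgraph_iff_mem_edges.mpr (hsub (adj_toSubgraph_iff_mem_edges.mp hw))
  have heq : c'.toSubgraph.neighborSet a = c.toSubgraph.neighborSet a :=
    Set.eq_of_subset_of_ncard_le hnbr
      (by rw [hc.ncard_neighborSet_toSubgraph_eq_two (c.fst_mem_support_of_mem_edges hab),
        hc'.ncard_neighborSet_toSubgraph_eq_two ha])
      (finite_neighborSet_toSubgraph c)
  have hb : b ∈ c'.toSubgraph.neighborSet a := heq ▸ adj_toSubgraph_iff_mem_edges.mpr hab
  exact adj_toSubgraph_iff_mem_edges.mp hb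

lemma IsCycle.walk_support_subset_of_edges_subset (hc : c.IsCycle) (hc' : c'.IsCycle)
    (hsub : c'.edges ⊆ c.edges) {a b : V} (p : G.Walk a b) (hp : p.edges ⊆ c.edges)
    (ha : a ∈ c'.support) : p.support ⊆ c'.support := by
  induction p with
  | nil => simpa using ha
  | cons hadj p ih =>
    rw [edges_cons, List.cons_subset] at hp
    rw [support_cons, List.cons_subset]
    exact ⟨ha, ih hp.2 (c'.snd_mem_support_of_mem_edges
      (hc.mem_edges_of_edges_subset hc' hsub ha hp.1))⟩

lemma IsCycle.support_subset_of_edges_subset [DecidableEq V] (hc : c.IsCycle) (hc' : c'.IsCycle)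
    (hsub : c'.edges ⊆ c.edges) : c.support ⊆ c'.support := by
  have hv : v ∈ c.support := c.fst_mem_support_of_mem_edges
    (hsub (adj_toSubgraph_iff_mem_edges.mp (c'.toSubgraph_adj_snd hc'.not_nil)))
  intro x hx
  refine hc.walk_support_subset_of_edges_subset hc' hsub (c.rotate v hv)
    (fun e he ↦ (rotate_edges c v hv).mem_iff.mp he) (start_mem_support _) ?_
  rwa [mem_support_rotate_iff]

end CycleInCycle

lemma isAcyclic_induce_compl_iff_exists_mem_support [DecidableEq V] {u : V} {c : G.Walk u u}
    (hc : c.IsCycle) (hG : ∀ e ∈ G.edgeSet, e ∈ c.edges) (S : Set V) :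
    (G.induce Sᶜ).IsAcyclic ↔ ∃ x ∈ c.support, x ∈ S := by
  constructor
  · contrapose!
    exact hc.not_isAcyclic_induce
  · rintro ⟨x, hx, hxS⟩ w c' hc'
    let f : G.induce Sᶜ ↪g G := Embedding.induce Sᶜ
    let d := c'.map f.toHom
    have hxd : x ∈ d.support := hc.support_subset_of_edges_subset (hc'.map f.injective)
      (fun e he ↦ hG e (d.edges_subset_edgeSet he)) hx
    obtain ⟨y, -, rfl⟩ := List.mem_map.mp (support_map _ c' ▸ hxd)
    exact y.2 hxS

end SimpleGraph.Walk

open SimpleGraph.Walk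

theorem stmt_8_general (n k m : ℕ) (F : Fin m → Finset (Fin n))
    (G : Fin m → SimpleGraph (Fin n))
    (hcyc : ∀ i, ∃ (v : Fin n) (c : (G i).Walk v v), c.IsCycle ∧
      c.support.toFinset = F i ∧
      (∀ e ∈ (G i).edgeSet, e ∈ c.edges) ∧
      (∀ u w : Fin n, (G i).Adj u w → u ∈ F i)) :
    (∃ S : Finset (Fin n), S.card ≤ k ∧
      ∀ i, ((G i).induce ((S : Set (Fin n))ᶜ)).IsAcyclic) ↔
    (∃ H : Finset (Fin n), H.card ≤ k ∧ ∀ i, (H ∩ F i).Nonempty) := by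
  have key (S : Finset (Fin n)) (i : Fin m) :
      ((G i).induce ((S : Set (Fin n))ᶜ)).IsAcyclic ↔ (S ∩ F i).Nonempty := by
    obtain ⟨v, c, hc, hsupp, hedges, -⟩ := hcyc i
    rw [isAcyclic_induce_compl_iff_exists_mem_support hc hedges, ← hsupp]
    simp only [Finset.Nonempty, Finset.mem_inter, List.mem_toFinset, Finset.mem_coe, and_comm]
  simp only [key]

theorem stmt_8 (n k m : ℕ) (F : Fin m → Finset (Fin n)) (hF : ∀ i, 3 ≤ (F i).card)
    (G : Fin m → SimpleGraph (Fin n))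
    (hcyc : ∀ i, ∃ (v : Fin n) (c : (G i).Walk v v), c.IsCycle ∧
      c.support.toFinset = F i ∧
      (∀ e ∈ (G i).edgeSet, e ∈ c.edges) ∧
      (∀ u w : Fin n, (G i).Adj u w → u ∈ F i)) :
    (∃ S : Finset (Fin n), S.card ≤ k ∧
      ∀ i, ((G i).induce ((S : Set (Fin n))ᶜ)).IsAcyclic) ↔
    (∃ H : Finset (Fin n), H.card ≤ k ∧ ∀ i, (H ∩ F i).Nonempty) :=
  stmt_8_general n k m F G hcyc
end

section
/- Let 𝓕 be a finite nonempty family of finite simple graphs, each having at most q ≥ 1 vertices, and let G_1,…,G_t be finite simple graphs on a common finite vertex set V. For every integer k ≥ 0, the number of sets S ⊆ V with |S| ≤ k that are inclusion-wise minimal with the property that G_i − S is 𝓕-free for every i ∈ {1,…,t} is at most q^k. -/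
/-!
The sets `S` in question are exactly the minimal hitting sets of size at most `k` of the
hypergraph whose hyperedges are the vertex sets of induced copies of members of `𝓕` in the `Gᵢ`,
and every hyperedge has at most `q` vertices. A minimal hitting set meets a fixed hyperedge `e` in
some `v`, and removing `v` leaves a minimal hitting set, of size at most `k - 1`, of the
hyperedges avoiding `v`. Branching over the at most `q` choices of `v` gives the bound `q ^ k`.
-/

/-- A graph `G` is `𝓕`-free (for a family `H` of graphs indexed by `ι`) if no induced
subgraph of `G` is isomorphic to a member of the family. -/
def FFree {ι : Type*} {W : ι → Type*} (H : ∀ i, SimpleGraph (W i))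
    {V : Type*} (G : SimpleGraph V) : Prop :=
  ∀ i, ∀ A : Set V, IsEmpty (G.induce A ≃g H i)

namespace Finset

variable {α : Type*}

def IsHittingSet (𝓔 : Set (Finset α)) (S : Finset α) : Prop :=
  ∀ e ∈ 𝓔, ∃ x ∈ e, x ∈ S

lemma isHittingSet_iUnion {κ : Type*} {𝓔 : κ → Set (Finset α)} {S : Finset α} :
    IsHittingSet (⋃ j, 𝓔 j) S ↔ ∀ j, IsHittingSet (𝓔 j) S := by
  simp only [IsHittingSet, Set.mem_iUnion, forall_exists_index]
  exact forall_comm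

lemma minimal_isHittingSet_erase [DecidableEq α] {𝓔 : Set (Finset α)} {S : Finset α} {v : α}
    (hS : Minimal (IsHittingSet 𝓔) S) (hv : v ∈ S) :
    Minimal (IsHittingSet {e ∈ 𝓔 | v ∉ e}) (S.erase v) := by
  refine ⟨fun e ⟨he, hve⟩ ↦ ?_, fun T hT hTS ↦ ?_⟩
  · obtain ⟨x, hxe, hxS⟩ := hS.prop e he
    exact ⟨x, hxe, mem_erase.2 ⟨ne_of_mem_of_not_mem hxe hve, hxS⟩⟩
  · have hins : IsHittingSet 𝓔 (insert v T) := fun e he ↦ by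
      by_cases hve : v ∈ e
      · exact ⟨v, hve, mem_insert_self v T⟩
      · obtain ⟨x, hxe, hxT⟩ := hT e ⟨he, hve⟩
        exact ⟨x, hxe, mem_insert_of_mem hxT⟩
    have hle : insert v T ⊆ S := insert_subset hv (hTS.trans (erase_subset v S))
    rw [← hS.eq_of_le hins hle]
    exact erase_insert_subset v T

theorem encard_minimal_isHittingSet_le {q : ℕ} (hq : 1 ≤ q) (k : ℕ) (𝓔 : Set (Finset α))
    (h𝓔 : ∀ e ∈ 𝓔, e.card ≤ q) :
    {S | S.card ≤ k ∧ Minimal (IsHittingSet 𝓔) S}.encard ≤ q ^ k := by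
  classical
  induction k generalizing 𝓔 with
  | zero =>
    calc _ ≤ ({∅} : Set (Finset α)).encard :=
          Set.encard_le_encard fun S hS ↦ card_eq_zero.1 (Nat.le_zero.1 hS.1)
      _ = q ^ 0 := by simp
  | succ k ih =>
    by_cases h₀ : IsHittingSet 𝓔 ∅
    · calc _ ≤ ({∅} : Set (Finset α)).encard :=
            Set.encard_le_encard fun S hS ↦ (hS.2.eq_of_le h₀ (empty_subset S)).symm
        _ = 1 := Set.encard_singleton _
        _ ≤ q ^ (k + 1) := mod_cast Nat.one_le_pow _ _ hq
    obtain ⟨e, he⟩ : ∃ e, e ∈ 𝓔 := by simpa [IsHittingSet] using h₀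
    let branch (v : α) : Set (Finset α) :=
      insert v '' {T | T.card ≤ k ∧ Minimal (IsHittingSet {e ∈ 𝓔 | v ∉ e}) T}
    have hcover : {S | S.card ≤ k + 1 ∧ Minimal (IsHittingSet 𝓔) S} ⊆ ⋃ v ∈ e, branch v := by
      rintro S ⟨hcard, hS⟩
      obtain ⟨v, hve, hvS⟩ := hS.prop e he
      refine Set.mem_biUnion hve ⟨S.erase v, ⟨?_, minimal_isHittingSet_erase hS hvS⟩,
        insert_erase hvS⟩
      rw [card_erase_of_mem hvS]
      omega
    have hbranch (v : α) : (branch v).encard ≤ q ^ k :=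
      (Set.encard_image_le _ _).trans (ih _ fun e he ↦ h𝓔 e he.1)
    calc _ ≤ (⋃ v ∈ e, branch v).encard := Set.encard_le_encard hcover
      _ ≤ ∑ v ∈ e, (branch v).encard := e.set_encard_biUnion_le branch
      _ ≤ ∑ v ∈ e, (q ^ k : ℕ∞) := sum_le_sum fun v _ ↦ hbranch v
      _ ≤ q ^ (k + 1) := by
        rw [sum_const, nsmul_eq_mul, pow_succ, mul_comm]
        exact mod_cast Nat.mul_le_mul_left _ (h𝓔 e he)

end Finset

namespace SimpleGraph

variable {V U : Type*}

lemma isIndContained_induce_iff {A : SimpleGraph U} {G : SimpleGraph V} {s : Set V} :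
    A ⊴ G.induce s ↔ ∃ f : A ↪g G, Set.range f ⊆ s := by
  constructor
  · rintro ⟨f⟩
    exact ⟨(Embedding.induce s).comp f, by rintro _ ⟨x, rfl⟩; exact (f x).2⟩
  · rintro ⟨f, hf⟩
    exact ⟨(induceHomOfLE G hf).comp f.isoInduceRange.toEmbedding⟩

variable {ι : Type*} {W : ι → Type*}

lemma ffree_iff_forall_not_isIndContained (H : ∀ i, SimpleGraph (W i)) (G : SimpleGraph V) :
    FFree H G ↔ ∀ i, ¬ H i ⊴ G := by
  simp only [FFree, isIndContained_iff_exists_iso_induce, not_exists, not_nonempty_iff]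
  exact ⟨fun h i A ↦ ⟨((h i A).false ·.symm)⟩, fun h i A ↦ ⟨((h i A).false ·.symm)⟩⟩

variable [∀ i, Fintype (W i)]

def inducedCopies (H : ∀ i, SimpleGraph (W i)) (G : SimpleGraph V) : Set (Finset V) :=
  ⋃ i, Set.range fun f : H i ↪g G ↦ Finset.univ.map f.toEmbedding

lemma card_le_of_mem_inducedCopies {H : ∀ i, SimpleGraph (W i)} {G : SimpleGraph V}
    {q : ℕ} (hW : ∀ i, Fintype.card (W i) ≤ q) {e : Finset V} (he : e ∈ inducedCopies H G) :
    e.card ≤ q := by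
  obtain ⟨i, f, rfl⟩ := Set.mem_iUnion.1 he
  simpa using hW i

lemma ffree_induce_compl_iff_isHittingSet (H : ∀ i, SimpleGraph (W i)) (G : SimpleGraph V)
    (S : Finset V) :
    FFree H (G.induce (S : Set V)ᶜ) ↔ Finset.IsHittingSet (inducedCopies H G) S := by
  simp [ffree_iff_forall_not_isIndContained, isIndContained_induce_iff, inducedCopies,
    Finset.IsHittingSet, Set.range_subset_iff, forall_comm (α := Finset V)]

end SimpleGraph

theorem stmt_11_general {ι : Type*}
    {W : ι → Type*} [∀ i, Fintype (W i)] (H : ∀ i, SimpleGraph (W i))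
    (q : ℕ) (hq : 1 ≤ q) (hWcard : ∀ i, Fintype.card (W i) ≤ q)
    {V : Type*} (t : ℕ) (G : Fin t → SimpleGraph V) (k : ℕ) :
    {S : Finset V | S.card ≤ k ∧
      (∀ i, FFree H ((G i).induce ((S : Set V)ᶜ))) ∧
      ∀ S' ⊂ S, ¬ (∀ i, FFree H ((G i).induce ((S' : Set V)ᶜ)))}.ncard ≤ q ^ k := by
  set 𝓔 := ⋃ j, SimpleGraph.inducedCopies H (G j)
  have hfree (S : Finset V) :
      (∀ j, FFree H ((G j).induce (S : Set V)ᶜ)) ↔ Finset.IsHittingSet 𝓔 S := by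
    simp only [SimpleGraph.ffree_induce_compl_iff_isHittingSet, 𝓔, Finset.isHittingSet_iUnion]
  have h𝓔 : ∀ e ∈ 𝓔, e.card ≤ q := fun e he ↦ by
    obtain ⟨j, hj⟩ := Set.mem_iUnion.1 he
    exact SimpleGraph.card_le_of_mem_inducedCopies hWcard hj
  calc _ = {S | S.card ≤ k ∧ Minimal (Finset.IsHittingSet 𝓔) S}.ncard := by
        congr! 3 with S
        simp only [hfree, minimal_iff_forall_lt]
    _ ≤ q ^ k := ENat.toNat_le_of_le_natCast <| mod_cast
        Finset.encard_minimal_isHittingSet_le hq k 𝓔 h𝓔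

theorem stmt_11 {ι : Type*} [Fintype ι] [Nonempty ι]
    {W : ι → Type*} [∀ i, Fintype (W i)] (H : ∀ i, SimpleGraph (W i))
    (q : ℕ) (hq : 1 ≤ q) (hWcard : ∀ i, Fintype.card (W i) ≤ q)
    {V : Type*} [Fintype V] (t : ℕ) (G : Fin t → SimpleGraph V) (k : ℕ) :
    {S : Finset V | S.card ≤ k ∧
      (∀ i, FFree H ((G i).induce ((S : Set V)ᶜ))) ∧
      ∀ S' ⊂ S, ¬ (∀ i, FFree H ((G i).induce ((S' : Set V)ᶜ)))}.ncard ≤ q ^ k :=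
  stmt_11_general H q hq hWcard t G k
end

section
/- Let X be a nonempty finite set, D a probability distribution on X, c : X → {0,1} a target function, and H a finite nonempty set of functions from X to {0,1}. Let ε, δ ∈ (0,1) and let t be a positive integer with t ≥ (ln|H| + ln(1/δ))/ε. Then the probability, over t independent samples x_1,…,x_t drawn from D, that there exists h ∈ H with err(h) > ε that is consistent with the sample (i.e., h(x_j) = c(x_j) for all j ∈ {1,…,t}) is at most δ. -/
theorem stmt_12 {X : Type*} [Fintype X] [Nonempty X]
    (D : X → ℝ) (hD0 : ∀ x, 0 ≤ D x) (hD1 : ∑ x, D x = 1)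
    (c : X → Bool) (Hs : Finset (X → Bool)) (hHs : Hs.Nonempty)
    (ε δ : ℝ) (hε : 0 < ε ∧ ε < 1) (hδ : 0 < δ ∧ δ < 1)
    (t : ℕ) (ht : 1 ≤ t)
    (hT : (Real.log (Hs.card : ℝ) + Real.log (1 / δ)) / ε ≤ (t : ℝ)) :
    ∑ xs : Fin t → X,
      {xs : Fin t → X | ∃ h ∈ Hs,
          ε < (∑ x ∈ Finset.univ.filter (fun x => h x ≠ c x), D x) ∧
          ∀ j, h (xs j) = c (xs j)}.indicator
        (fun xs => ∏ j, D (xs j)) xs ≤ δ := by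
  classical
  obtain ⟨hε0, hε1⟩ := hε
  obtain ⟨hδ0, hδ1⟩ := hδ
  set bad : Finset (X → Bool) := Hs.filter
    (fun h => ε < ∑ x ∈ Finset.univ.filter (fun x => h x ≠ c x), D x) with hbad
  set g : (X → Bool) → X → ℝ := fun h x => if h x = c x then D x else 0 with hg
  -- pointwise bound by union
  have step1 : ∀ xs : Fin t → X,
      {xs : Fin t → X | ∃ h ∈ Hs,
          ε < (∑ x ∈ Finset.univ.filter (fun x => h x ≠ c x), D x) ∧
          ∀ j, h (xs j) = c (xs j)}.indicator
        (fun xs => ∏ j, D (xs j)) xs ≤ ∑ h ∈ bad, ∏ j, g h (xs j) := by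
    intro xs
    by_cases hxs : xs ∈ {xs : Fin t → X | ∃ h ∈ Hs,
          ε < (∑ x ∈ Finset.univ.filter (fun x => h x ≠ c x), D x) ∧
          ∀ j, h (xs j) = c (xs j)}
    · rw [Set.indicator_of_mem hxs]
      obtain ⟨h, hh, herr, hcons⟩ := hxs
      have hmem : h ∈ bad := Finset.mem_filter.mpr ⟨hh, herr⟩
      have : ∏ j, D (xs j) = ∏ j, g h (xs j) := by
        refine Finset.prod_congr rfl fun j _ => ?_
        simp [hg, hcons j]
      rw [this]
      refine Finset.single_le_sum (f := fun h' => ∏ j, g h' (xs j)) (fun h' _ => ?_) hmem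
      exact Finset.prod_nonneg fun j _ => by
        simp only [hg]; split <;> simp [hD0]
    · rw [Set.indicator_of_notMem hxs]
      refine Finset.sum_nonneg fun h' _ => Finset.prod_nonneg fun j _ => ?_
      simp only [hg]; split <;> simp [hD0]
  calc ∑ xs : Fin t → X, _ ≤ ∑ xs : Fin t → X, ∑ h ∈ bad, ∏ j, g h (xs j) :=
        Finset.sum_le_sum fun xs _ => step1 xs
    _ = ∑ h ∈ bad, (∑ x, g h x) ^ t := by
        rw [Finset.sum_comm]
        refine Finset.sum_congr rfl fun h _ => ?_
        rw [Finset.sum_pow', Fintype.piFinset_univ]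
    _ ≤ ∑ _h ∈ bad, (1 - ε) ^ t := by
        refine Finset.sum_le_sum fun h hh => ?_
        obtain ⟨hhH, herr⟩ := Finset.mem_filter.mp hh
        have hsplit : (∑ x, g h x) + (∑ x ∈ Finset.univ.filter (fun x => h x ≠ c x), D x) = 1 := by
          rw [← hD1]
          have : ∑ x, g h x = ∑ x ∈ Finset.univ.filter (fun x => h x = c x), D x := by
            rw [Finset.sum_filter]
          rw [this, ← Finset.sum_filter_add_sum_filter_not Finset.univ (fun x => h x = c x) D]
        have hle : ∑ x, g h x ≤ 1 - ε := by linarith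
        have hnn : 0 ≤ ∑ x, g h x :=
          Finset.sum_nonneg fun x _ => by simp only [hg]; split <;> simp [hD0]
        exact pow_le_pow_left₀ hnn hle t
    _ ≤ (Hs.card : ℝ) * (1 - ε) ^ t := by
        rw [Finset.sum_const, nsmul_eq_mul]
        refine mul_le_mul_of_nonneg_right ?_ (pow_nonneg (by linarith) t)
        exact_mod_cast Finset.card_le_card (Finset.filter_subset _ _)
    _ ≤ (Hs.card : ℝ) * Real.exp (-ε * t) := by
        refine mul_le_mul_of_nonneg_left ?_ (by positivity)
        rw [show (-ε * t : ℝ) = t • (-ε) by push_cast; ring, Real.exp_nsmul]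
        exact pow_le_pow_left₀ (by linarith) (by linarith [Real.add_one_le_exp (-ε)]) t
    _ ≤ δ := by
        have hcard1 : (1 : ℝ) ≤ Hs.card := by exact_mod_cast hHs.card_pos
        have hcard0 : (0 : ℝ) < Hs.card := by linarith
        have key : Real.exp (-ε * t) ≤ δ / Hs.card := by
          rw [← Real.exp_log (show (0:ℝ) < δ / Hs.card by positivity)]
          apply Real.exp_le_exp.mpr
          rw [Real.log_div (by linarith) (by linarith)]
          have := (div_le_iff₀ hε0).mp hT
          rw [Real.log_div one_ne_zero (by linarith), Real.log_one] at this
          nlinarith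
        calc (Hs.card : ℝ) * Real.exp (-ε * t) ≤ (Hs.card : ℝ) * (δ / Hs.card) :=
              mul_le_mul_of_nonneg_left key (le_of_lt hcard0)
          _ = δ := by field_simp
end

section
/- Let n, k be positive integers with n ≥ k+2 and let S ⊆ {1,…,n} ∖ {1,…,k+2}. For i = 2,…,k+2, let x_i ∈ {0,1}^n set variable i to true and set every variable in ({1,…,n} ∖ S) ∖ {i} to false, and suppose x_2,…,x_{k+2} all agree on the variables of S. Let φ = T_1 ∨ ⋯ ∨ T_k be a DNF formula with k terms that is satisfied by each of x_2,…,x_{k+2}. Then some term T_j of φ contains no positive literal of a variable outside of S. -/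
/-! Pigeonhole: among more satisfying assignments than terms, two distinct ones satisfy the same
term. Off `S` the two assignments are true at different single variables, so a positive literal of
that common term cannot lie outside `S`. -/

theorem SatDNF.exists_satTerm_of_length_lt {n : ℕ} {ι : Type*} {φ : List (Finset (Fin n × Bool))}
    {I : Finset ι} {x : ι → Fin n → Bool} (hlen : φ.length < I.card)
    (hsat : ∀ i ∈ I, SatDNF φ (x i)) :
    ∃ T ∈ φ, ∃ i ∈ I, ∃ j ∈ I, i ≠ j ∧ SatTerm T (x i) ∧ SatTerm T (x j) := by
  classical
  choose! t ht using hsat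
  have hcard : φ.toFinset.card < I.card := φ.toFinset_card_le.trans_lt hlen
  obtain ⟨i, hi, j, hj, hij, htij⟩ := Finset.exists_ne_map_eq_of_card_lt_of_maps_to hcard
    (fun i hi => List.mem_toFinset.2 (ht i hi).1)
  exact ⟨t i, (ht i hi).1, i, hi, j, hj, hij, (ht i hi).2, htij ▸ (ht j hj).2⟩

theorem SatTerm.fst_mem_of_snd_eq_true {n : ℕ} {T : Finset (Fin n × Bool)} {S : Finset (Fin n)}
    {y z : Fin n → Bool} {a b : Fin n} (hab : a ≠ b)
    (hy : ∀ v ∉ S, v ≠ a → y v = false) (hz : ∀ v ∉ S, v ≠ b → z v = false)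
    (hTy : SatTerm T y) (hTz : SatTerm T z) :
    ∀ l ∈ T, l.2 = true → l.1 ∈ S := by
  intro l hl hpos
  by_contra hlS
  have hyl : y l.1 = true := (hTy l hl).trans hpos
  have hzl : z l.1 = true := (hTz l hl).trans hpos
  have hla : l.1 = a := by_contra fun h => by simp [hy l.1 hlS h] at hyl
  have hlb : l.1 = b := by_contra fun h => by simp [hz l.1 hlS h] at hzl
  exact hab (hla.symm.trans hlb)

/-- Variables and samples are 0-indexed: the samples `x_2, …, x_{k+2}` of the
natural-language statement are `x 1, …, x (k+1)` here, and sample `x i` sets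
variable `⟨i⟩ : Fin n` to true. -/
theorem stmt_16 (n k : ℕ) (hn : k + 2 ≤ n)
    (S : Finset (Fin n))
    (x : ℕ → Fin n → Bool)
    (hx : ∀ i, 1 ≤ i → ∀ hi : i ≤ k + 1,
      x i ⟨i, by omega⟩ = true ∧
      ∀ v : Fin n, v ∉ S → (v : ℕ) ≠ i → x i v = false)
    (φ : List (Finset (Fin n × Bool))) (hlen : φ.length = k)
    (hsat : ∀ i, 1 ≤ i → i ≤ k + 1 → SatDNF φ (x i)) :
    ∃ T ∈ φ, ∀ l ∈ T, l.2 = true → l.1 ∈ S := by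
  have hlen' : φ.length < (Finset.Icc 1 (k + 1)).card := by simp [hlen]
  obtain ⟨T, hT, i, hi, j, hj, hij, hTi, hTj⟩ :=
    SatDNF.exists_satTerm_of_length_lt hlen' fun i hi => hsat i (Finset.mem_Icc.1 hi).1
      (Finset.mem_Icc.1 hi).2
  rw [Finset.mem_Icc] at hi hj
  have off_support : ∀ m (hm : 1 ≤ m ∧ m ≤ k + 1),
      ∀ v ∉ S, v ≠ ⟨m, by omega⟩ → x m v = false :=
    fun m hm v hv hvm => (hx m hm.1 hm.2).2 v hv fun h => hvm (Fin.ext h)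
  exact ⟨T, hT, hTi.fst_mem_of_snd_eq_true (fun h => hij (Fin.val_eq_of_eq h))
    (off_support i hi) (off_support j hj) hTj⟩
end
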